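/- arXiv:2011.14720 — 4 statements merged into one kernel-verified Lean document; each statement's English description precedes it below -/
import Mathlib

section
/- For the Morava K-theory logarithm l(t) = Σ_{k≥0} 2^{-k} v^{(2^{nk}-1)/(2^n-1)} t^{2^{nk}}, the coefficient of t^{i+1} in l(t), multiplied by (i+1), equals 2^{(n-1)k} v^{(2^{nk}-1)/(2^n-1)} if i = 2^{nk} − 1 for some k ≥ 0, and 0 otherwise. In particular, for n ≥ 2 and i > 0, this quantity is congruent to 0 modulo 2. -/
open Polynomial

/-- The coefficient of `t^j` in the Morava K-theory logarithm
`l(t) = Σ_{k≥0} 2^{-k} v^{(2^{nk}-1)/(2^n-1)} t^{2^{nk}}`, as a polynomial in `v = X` over `ℚ`. -/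
noncomputable def moravaLogCoeff (n j : ℕ) : Polynomial ℚ :=
  ∑ m ∈ Finset.range (j + 1),
    if j = 2 ^ (n * m) then Polynomial.C ((1 : ℚ) / 2 ^ m) *
      Polynomial.X ^ ((2 ^ (n * m) - 1) / (2 ^ n - 1)) else 0

/-! The only nonzero coefficients sit at `t^{2^{nk}}`; there `2^{nk} · 2^{-k} = 2^{(n-1)k}`,
which is even as soon as `n ≥ 2` and `k ≥ 1`, while `k = 0` is the excluded case `i = 0`. -/

lemma two_pow_mul_injective {n : ℕ} (hn : 0 < n) : Function.Injective fun m : ℕ => 2 ^ (n * m) :=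
  fun _ _ h => Nat.eq_of_mul_eq_mul_left hn (Nat.pow_right_injective le_rfl h)

lemma moravaLogCoeff_two_pow {n : ℕ} (hn : 0 < n) (k : ℕ) :
    moravaLogCoeff n (2 ^ (n * k)) = C (1 / 2 ^ k) * X ^ ((2 ^ (n * k) - 1) / (2 ^ n - 1)) := by
  have hk : k < 2 ^ (n * k) + 1 :=
    (Nat.lt_two_pow_self.trans_le (Nat.pow_le_pow_right two_pos (Nat.le_mul_of_pos_left k hn))).trans
      (Nat.lt_succ_self _)
  rw [moravaLogCoeff, Finset.sum_eq_single_of_mem k (Finset.mem_range.2 hk)]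
  · exact if_pos rfl
  · exact fun m _ hmk => if_neg fun h => hmk (two_pow_mul_injective hn h).symm

lemma moravaLogCoeff_eq_zero {n j : ℕ} (h : ∀ m, j ≠ 2 ^ (n * m)) : moravaLogCoeff n j = 0 :=
  Finset.sum_eq_zero fun m _ => if_neg (h m)

lemma two_pow_mul_moravaLogCoeff_two_pow {n : ℕ} (hn : 0 < n) (k : ℕ) :
    ((2 ^ (n * k) : ℕ) : ℚ[X]) * moravaLogCoeff n (2 ^ (n * k)) =
      C (2 ^ ((n - 1) * k)) * X ^ ((2 ^ (n * k) - 1) / (2 ^ n - 1)) := by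
  have hexp : n * k = (n - 1) * k + k := by
    rw [← Nat.succ_mul, Nat.succ_eq_add_one, Nat.sub_add_cancel hn]
  have hcoeff : ((2 ^ (n * k) : ℕ) : ℚ) * (1 / 2 ^ k) = 2 ^ ((n - 1) * k) := by
    rw [Nat.cast_pow, Nat.cast_ofNat, hexp, pow_add]
    field_simp
  rw [moravaLogCoeff_two_pow hn, ← C_eq_natCast, ← mul_assoc, ← C_mul, hcoeff]

lemma C_two_pow_mul_X_pow_eq_map_two_mul {a : ℕ} (ha : 0 < a) (e : ℕ) :
    C ((2 : ℚ) ^ a) * X ^ e = map (Int.castRingHom ℚ) (2 * (C (2 ^ (a - 1)) * X ^ e)) := by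
  rw [← pow_sub_one_mul ha.ne']
  simp only [Polynomial.map_mul, Polynomial.map_pow, Polynomial.map_ofNat, map_X, C_mul, C_pow,
    C_ofNat]
  ring

/-- `(i+1)` times the coefficient of `t^{i+1}` in the Morava logarithm (which is the class
`[ℙ^i]` in Morava K-theory) equals `2^{(n-1)k} v^{(2^{nk}-1)/(2^n-1)}` if `i = 2^{nk} - 1`
for some `k`, and `0` otherwise; in particular, for `n ≥ 2` and `i > 0` it is congruent to `0`
modulo `2`, i.e. it is twice an integral polynomial. -/
theorem morava_projective_space_classes (n : ℕ) (hn : 1 ≤ n) :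
    (∀ i k : ℕ, i = 2 ^ (n * k) - 1 →
      ((i : Polynomial ℚ) + 1) * moravaLogCoeff n (i + 1) =
        Polynomial.C ((2 : ℚ) ^ ((n - 1) * k)) *
          Polynomial.X ^ ((2 ^ (n * k) - 1) / (2 ^ n - 1))) ∧
    (∀ i : ℕ, (∀ k : ℕ, i ≠ 2 ^ (n * k) - 1) →
      ((i : Polynomial ℚ) + 1) * moravaLogCoeff n (i + 1) = 0) ∧
    (2 ≤ n → ∀ i : ℕ, 0 < i →
      ∃ q : Polynomial ℤ,
        ((i : Polynomial ℚ) + 1) * moravaLogCoeff n (i + 1) =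
          Polynomial.map (Int.castRingHom ℚ) (2 * q)) := by
  have hcast (i : ℕ) : ((i : ℚ[X]) + 1) = ((i + 1 : ℕ) : ℚ[X]) := by push_cast; rfl
  have power (i k : ℕ) (hi : i = 2 ^ (n * k) - 1) :
      ((i : ℚ[X]) + 1) * moravaLogCoeff n (i + 1) =
        C (2 ^ ((n - 1) * k)) * X ^ ((2 ^ (n * k) - 1) / (2 ^ n - 1)) := by
    rw [hcast, hi, Nat.sub_add_cancel Nat.one_le_two_pow, two_pow_mul_moravaLogCoeff_two_pow hn]
  have nonpower (i : ℕ) (hi : ∀ k, i ≠ 2 ^ (n * k) - 1) :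
      ((i : ℚ[X]) + 1) * moravaLogCoeff n (i + 1) = 0 := by
    rw [moravaLogCoeff_eq_zero fun m h => hi m (by omega), mul_zero]
  refine ⟨power, nonpower, fun hn2 i hi => ?_⟩
  by_cases h : ∃ k, i = 2 ^ (n * k) - 1
  · obtain ⟨k, hk⟩ := h
    have hk0 : k ≠ 0 := by rintro rfl; simp at hk; omega
    rw [power i k hk, C_two_pow_mul_X_pow_eq_map_two_mul (Nat.mul_pos (by omega) (by omega))]
    exact ⟨_, rfl⟩
  · exact ⟨0, by rw [nonpower i (not_exists.1 h)]; simp⟩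
end

section
/- Let R = F_2[v, v^{-1}] and d ≥ 1, D ∈ {2d, 2d+1}. Define the free R-module A with basis {h^0, h^1, ..., h^d, l_0, l_1, ..., l_d} and a commutative R-algebra structure determined by: h·l_i = l_{i-1} for i > 0, h·l_0 = 0, l_i·l_j = l_0 if i = j = d and D ≡ 0 mod 4 and l_i·l_j = 0 otherwise, and h^{d+1} = v·l_{D-d-2^n} if D ≥ 2^{n+1}−1 (interpreting l_s = 0 for s < 0) and h^{d+1} = 0 if D < 2^{n+1}−1. Then this multiplication is well-defined, associative and commutative. -/
noncomputable section

/-- The coefficient ring `F₂[v, v⁻¹]`. -/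
abbrev R2 : Type := LaurentPolynomial (ZMod 2)

/-- The invertible element `v ∈ F₂[v, v⁻¹]`. -/
def vElt : R2 := LaurentPolynomial.T 1

/-- Index type for the basis `h^0, …, h^d` (left) and `l_0, …, l_d` (right) of
`K(n)^*(Q; F₂)` for a split quadric of dimension `D ∈ {2d, 2d+1}`. -/
abbrev QIdx (d : ℕ) := Fin (d + 1) ⊕ Fin (d + 1)

/-- The basis vector `h^a` (with `h^a = 0` for `a` out of range). -/
def hSingle (d : ℕ) (a : ℤ) (r : R2) : QIdx d → R2 :=
  fun k => match k with
  | .inl j => if (j : ℤ) = a then r else 0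
  | .inr _ => 0

/-- The basis vector `l_i` scaled by `r` (with `l_i = 0` for `i` out of range, in particular
for `i < 0`). -/
def lSingle (d : ℕ) (i : ℤ) (r : R2) : QIdx d → R2 :=
  fun k => match k with
  | .inl _ => 0
  | .inr j => if (j : ℤ) = i then r else 0

/-- Structure constants of `K(n)^*(Q; F₂)`: products of basis elements, following the
multiplication table `h·l_i = l_{i-1}` (`i > 0`), `h·l_0 = 0`,
`l_i·l_j = l_0` iff `i = j = d` and `D ≡ 0 mod 4` (else `0`), and
`h^{d+1} = v·l_{D-d-2^n}` if `D ≥ 2^{n+1} - 1`, `h^{d+1} = 0` otherwise. -/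
def basisMul (n d D : ℕ) : QIdx d → QIdx d → (QIdx d → R2) :=
  fun x y => match x, y with
  | .inl a, .inl b =>
      if (a : ℕ) + b ≤ d then hSingle d ((a : ℕ) + b) 1
      else if 2 ^ (n + 1) - 1 ≤ D then
        lSingle d ((D : ℤ) - 2 ^ n + 1 - a - b) vElt
      else 0
  | .inl a, .inr i => lSingle d ((i : ℤ) - a) 1
  | .inr i, .inl a => lSingle d ((i : ℤ) - a) 1
  | .inr i, .inr j =>
      if (i : ℕ) = d ∧ (j : ℕ) = d ∧ D % 4 = 0 then lSingle d 0 1 else 0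

/-- The bilinear extension of the structure constants to the free `F₂[v,v⁻¹]`-module on the
basis `h^0, …, h^d, l_0, …, l_d`. -/
def quadricMul (n d D : ℕ) (x y : QIdx d → R2) : QIdx d → R2 :=
  fun k => ∑ i : QIdx d, ∑ j : QIdx d, x i * y j * basisMul n d D i j k

/-!
The product is the bilinear extension of the structure constants `basisMul`, so the three laws
only need checking on basis vectors, and for a commutative product associativity amounts to
`(x y) z = (z y) x`. With integer indices and out-of-range basis vectors read as zero, the table
becomes uniform: the threshold `2^(n+1) - 1 ≤ D` can be dropped, because below it the index of `l`
in `h^(d+1) = v l_(D-d-2^n)` is already negative. On basis vectors `(x y) z = (z y) x` is then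
index arithmetic.
-/

section StructureConstants

variable {R ι : Type*} [CommSemiring R] [Fintype ι] (μ : ι → ι → ι → R)

def structMul (x y : ι → R) : ι → R := fun k => ∑ i, ∑ j, x i * y j * μ i j k

def structMulₗ : (ι → R) →ₗ[R] (ι → R) →ₗ[R] ι → R :=
  LinearMap.mk₂ R (structMul μ)
    (fun _ _ _ => by funext; simp [structMul, add_mul, Finset.sum_add_distrib])
    (fun _ _ _ => by funext; simp [structMul, Finset.mul_sum, mul_assoc])
    (fun _ _ _ => by funext; simp [structMul, mul_add, add_mul, Finset.sum_add_distrib])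
    (fun _ _ _ => by funext; simp [structMul, Finset.mul_sum, mul_assoc, mul_left_comm])

variable {μ}

theorem structMulₗ_apply (x y : ι → R) : structMulₗ μ x y = structMul μ x y := rfl

theorem structMul_zero_left (y : ι → R) : structMul μ 0 y = 0 :=
  LinearMap.map_zero₂ (structMulₗ μ) y

theorem structMul_zero_right (x : ι → R) : structMul μ x 0 = 0 := map_zero (structMulₗ μ x)

theorem structMul_smul_left (r : R) (x y : ι → R) :
    structMul μ (r • x) y = r • structMul μ x y :=
  LinearMap.map_smul₂ (structMulₗ μ) r x y

theorem structMul_comm (hμ : ∀ i j, μ i j = μ j i) (x y : ι → R) :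
    structMul μ x y = structMul μ y x := by
  funext k
  rw [structMul, Finset.sum_comm]
  simp only [structMul, hμ, mul_comm (x _)]

variable [DecidableEq ι]

theorem structMul_single_left (i : ι) (y : ι → R) :
    structMul μ (Pi.single i 1) y = ∑ j, y j • μ i j := by
  funext k
  simp [structMul, Pi.single_apply, Finset.sum_apply]

theorem structMul_single_single (i j : ι) :
    structMul μ (Pi.single i 1) (Pi.single j 1) = μ i j := by
  simp [structMul_single_left]

theorem structMul_assoc (hcomm : ∀ i j, μ i j = μ j i)
    (hμ : ∀ a b c, structMul μ (structMul μ (Pi.single a 1) (Pi.single b 1)) (Pi.single c 1) =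
      structMul μ (structMul μ (Pi.single c 1) (Pi.single b 1)) (Pi.single a 1))
    (x y z : ι → R) :
    structMul μ (structMul μ x y) z = structMul μ x (structMul μ y z) := by
  have hμ' : ∀ a b c, structMul μ (Pi.single a 1) (structMul μ (Pi.single b 1) (Pi.single c 1)) =
      structMul μ (structMul μ (Pi.single a 1) (Pi.single b 1)) (Pi.single c 1) := fun a b c => by
    rw [structMul_comm hcomm (Pi.single a 1), structMul_comm hcomm (Pi.single b 1), hμ]
  change structMulₗ μ (structMulₗ μ x y) z = structMulₗ μ x (structMulₗ μ y z)
  rw [pi_eq_sum_univ' x, pi_eq_sum_univ' y, pi_eq_sum_univ' z]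
  simp only [map_sum, map_smul, LinearMap.sum_apply, LinearMap.smul_apply, structMulₗ_apply, hμ']

theorem structMul_single_left_eq_self {o : ι} (ho : ∀ j, μ o j = Pi.single j 1) (x : ι → R) :
    structMul μ (Pi.single o 1) x = x := by
  simpa [structMul_single_left, ho] using (pi_eq_sum_univ' x).symm

end StructureConstants

section Quadric

variable {n d D : ℕ}

theorem single_inl_eq_hSingle (j : Fin (d + 1)) :
    (Pi.single (.inl j) 1 : QIdx d → R2) = hSingle d j 1 := by
  funext k
  rcases k with k | k <;> simp [hSingle, Pi.single_apply, Fin.ext_iff, eq_comm]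

theorem single_inr_eq_lSingle (j : Fin (d + 1)) :
    (Pi.single (.inr j) 1 : QIdx d → R2) = lSingle d j 1 := by
  funext k
  rcases k with k | k <;> simp [lSingle, Pi.single_apply, Fin.ext_iff, eq_comm]

theorem lSingle_eq_zero {i : ℤ} (hi : i < 0 ∨ d < i) (r : R2) : lSingle d i r = 0 := by
  funext k
  rcases k with k | k
  · rfl
  · have : (k : ℤ) ≠ i := by omega
    simp [lSingle, this]

theorem lSingle_eq_smul (i : ℤ) (r : R2) : lSingle d i r = r • lSingle d i 1 := by
  funext k
  rcases k with k | k <;> simp [lSingle]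

theorem exists_fin_coe_eq {a : ℤ} (h0 : 0 ≤ a) (h1 : a ≤ d) : ∃ j : Fin (d + 1), (j : ℤ) = a :=
  ⟨⟨a.toNat, by omega⟩, by simp; omega⟩

theorem quadricMul_eq_structMul : quadricMul n d D = structMul (basisMul n d D) := rfl

theorem basisMul_comm (x y : QIdx d) : basisMul n d D x y = basisMul n d D y x := by
  rcases x with a | i <;> rcases y with b | j
  · simp only [basisMul, add_comm (b : ℕ), sub_sub, add_comm (b : ℤ)]
  · rfl
  · rfl
  · simp only [basisMul, and_left_comm]

theorem quadricMul_comm (x y : QIdx d → R2) : quadricMul n d D x y = quadricMul n d D y x :=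
  structMul_comm basisMul_comm x y

theorem quadricMul_smul_left (r : R2) (x y : QIdx d → R2) :
    quadricMul n d D (r • x) y = r • quadricMul n d D x y :=
  structMul_smul_left r x y

theorem quadricMul_zero_left (y : QIdx d → R2) : quadricMul n d D 0 y = 0 :=
  structMul_zero_left y

theorem quadricMul_hSingle_hSingle (hD : D = 2 * d ∨ D = 2 * d + 1) {a b : ℤ}
    (ha : 0 ≤ a ∧ a ≤ d) (hb : 0 ≤ b ∧ b ≤ d) :
    quadricMul n d D (hSingle d a 1) (hSingle d b 1) =
      if a + b ≤ d then hSingle d (a + b) 1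
      else vElt • lSingle d (D - 2 ^ n + 1 - a - b) 1 := by
  obtain ⟨a, rfl⟩ := exists_fin_coe_eq ha.1 ha.2
  obtain ⟨b, rfl⟩ := exists_fin_coe_eq hb.1 hb.2
  rw [← single_inl_eq_hSingle, ← single_inl_eq_hSingle, quadricMul_eq_structMul,
    structMul_single_single, ← lSingle_eq_smul]
  simp only [basisMul]
  split_ifs <;> try first | rfl | omega
  refine (lSingle_eq_zero (.inl ?_) _).symm
  have : 2 ^ (n + 1) = 2 * 2 ^ n := by ring
  have : ((2 ^ n : ℕ) : ℤ) = 2 ^ n := by push_cast; ring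
  omega

theorem quadricMul_hSingle_lSingle {a i : ℤ} (ha : 0 ≤ a ∧ a ≤ d) (hi : i ≤ d) :
    quadricMul n d D (hSingle d a 1) (lSingle d i 1) = lSingle d (i - a) 1 := by
  obtain ⟨a, rfl⟩ := exists_fin_coe_eq ha.1 ha.2
  rcases lt_or_ge i 0 with hi0 | hi0
  · rw [lSingle_eq_zero (.inl hi0), lSingle_eq_zero (.inl (by omega)), quadricMul_eq_structMul,
      structMul_zero_right]
  obtain ⟨i, rfl⟩ := exists_fin_coe_eq hi0 hi
  rw [← single_inl_eq_hSingle, ← single_inr_eq_lSingle, quadricMul_eq_structMul,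
    structMul_single_single]
  rfl

theorem quadricMul_lSingle_hSingle {a i : ℤ} (ha : 0 ≤ a ∧ a ≤ d) (hi : i ≤ d) :
    quadricMul n d D (lSingle d i 1) (hSingle d a 1) = lSingle d (i - a) 1 := by
  rw [quadricMul_comm, quadricMul_hSingle_lSingle ha hi]

theorem quadricMul_lSingle_lSingle (i j : ℤ) :
    quadricMul n d D (lSingle d i 1) (lSingle d j 1) =
      if i = d ∧ j = d ∧ D % 4 = 0 then lSingle d 0 1 else 0 := by
  by_cases hi : 0 ≤ i ∧ i ≤ d
  swap
  · rw [lSingle_eq_zero (by omega), quadricMul_zero_left, if_neg (by omega)]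
  by_cases hj : 0 ≤ j ∧ j ≤ d
  swap
  · rw [quadricMul_comm, lSingle_eq_zero (by omega), quadricMul_zero_left, if_neg (by omega)]
  obtain ⟨i, rfl⟩ := exists_fin_coe_eq hi.1 hi.2
  obtain ⟨j, rfl⟩ := exists_fin_coe_eq hj.1 hj.2
  rw [← single_inr_eq_lSingle, ← single_inr_eq_lSingle, quadricMul_eq_structMul,
    structMul_single_single]
  simp only [basisMul, Nat.cast_inj]

theorem quadricMul_single_single_single_symm (hD : D = 2 * d ∨ D = 2 * d + 1) (a b c : QIdx d) :
    quadricMul n d D (quadricMul n d D (Pi.single a 1) (Pi.single b 1)) (Pi.single c 1) =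
      quadricMul n d D (quadricMul n d D (Pi.single c 1) (Pi.single b 1)) (Pi.single a 1) := by
  have : (0 : ℤ) < 2 ^ n := by positivity
  rcases a with a | a <;> rcases b with b | b <;> rcases c with c | c <;>
    have := a.isLt <;> have := b.isLt <;> have := c.isLt <;>
    simp +contextual (disch := omega) only [single_inl_eq_hSingle, single_inr_eq_lSingle,
      quadricMul_hSingle_hSingle hD, quadricMul_hSingle_lSingle, quadricMul_lSingle_hSingle,
      quadricMul_lSingle_lSingle, quadricMul_smul_left, quadricMul_zero_left, lSingle_eq_zero,
      smul_zero, ite_self, apply_ite (quadricMul n d D), ite_apply] <;>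
    grind [lSingle_eq_zero]

theorem basisMul_inl_zero (j : QIdx d) : basisMul n d D (.inl 0) j = Pi.single j 1 := by
  rcases j with b | i
  · simp [basisMul, single_inl_eq_hSingle, Fin.is_le]
  · simp [basisMul, single_inr_eq_lSingle]

end Quadric

theorem quadricMul_comm_assoc_general (n d D : ℕ) (hD : D = 2 * d ∨ D = 2 * d + 1) :
    (∀ x y : QIdx d → R2, quadricMul n d D x y = quadricMul n d D y x) ∧
    (∀ x y z : QIdx d → R2,
      quadricMul n d D (quadricMul n d D x y) z =
        quadricMul n d D x (quadricMul n d D y z)) ∧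
    (∀ x : QIdx d → R2, quadricMul n d D (hSingle d 0 1) x = x) := by
  refine ⟨quadricMul_comm, structMul_assoc basisMul_comm
    (quadricMul_single_single_single_symm hD), fun x => ?_⟩
  rw [show hSingle d 0 1 = Pi.single (.inl 0) 1 by simpa using (single_inl_eq_hSingle 0).symm]
  exact structMul_single_left_eq_self basisMul_inl_zero x

/-- The multiplication table of `K(n)^*(Q; F₂)` of a split quadric of dimension
`D ∈ {2d, 2d+1}` defines a well-defined, associative and commutative multiplication,
with unit `h^0`. -/
theorem quadricMul_comm_assoc (n d D : ℕ) (hn : 2 ≤ n) (hd : 1 ≤ d)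
    (hD : D = 2 * d ∨ D = 2 * d + 1) :
    (∀ x y : QIdx d → R2, quadricMul n d D x y = quadricMul n d D y x) ∧
    (∀ x y z : QIdx d → R2,
      quadricMul n d D (quadricMul n d D x y) z =
        quadricMul n d D x (quadricMul n d D y z)) ∧
    (∀ x : QIdx d → R2, quadricMul n d D (hSingle d 0 1) x = x) :=
  quadricMul_comm_assoc_general n d D hD

end
end

section
/- In the ring A = F_2[v,v^{-1}][h, l]/(h^{d+1} − v h^{2^n} l, l² − ε·l h^{2d−2^n+1}, h^{D+1}) modeling K(n)^*(Q; F_2) of a split quadric of dimension D = 2d (with ε = 1 iff D ≡ 0 mod 4, and D ≥ 2^{n+1} − 1, n ≥ 2), the monomials h^0, ..., h^d together with l, lh, ..., lh^d form a basis of A as a free F_2[v,v^{-1}]-module, where lh^i corresponds to l_{d−i}. -/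
/-!
Write `h = X 0`, `l = X 1`, `v = T 1`. Since `2^n ≤ d`, the relations force `l·h^{d+1} = 0`
and `l² = 0`, and `h^{d+1+j} = v·l·h^{2^n+j}`; so every monomial reduces to a multiple of
some `h^a` or `l·h^a` with `a ≤ d`, which gives spanning. For independence, this reduction is an
`F₂[v,v⁻¹]`-linear map on `F₂[v,v⁻¹][h,l]` with values in the free module on the candidate
basis; it kills every monomial multiple of each generator of the ideal, hence the ideal.
-/

noncomputable section

open MvPolynomial

/-- The coefficient ring `F₂[v, v⁻¹]`. -/
abbrev Rq : Type := LaurentPolynomial (ZMod 2)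

/-- The defining ideal of `K(n)^*(Q; F₂) = F₂[v,v⁻¹][h,l]/(h^{d+1} − v h^{2^n} l,
l² − ε·l h^{2d−2^n+1}, h^{D+1})` for a split quadric of dimension `D = 2d`,
where `h = X 0`, `l = X 1` and `ε = 1` iff `D ≡ 0 mod 4`. -/
def qIdeal (n d : ℕ) : Ideal (MvPolynomial (Fin 2) Rq) :=
  Ideal.span
    { X 0 ^ (d + 1) - C (LaurentPolynomial.T 1) * X 0 ^ (2 ^ n) * X 1,
      X 1 ^ 2 - (if (2 * d) % 4 = 0 then 1 else 0 : MvPolynomial (Fin 2) Rq) *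
        X 1 * X 0 ^ (2 * d - 2 ^ n + 1),
      X 0 ^ (2 * d + 1) }

/-- The model `A` of `K(n)^*(Q; F₂)` for a split quadric of dimension `D = 2d`. -/
abbrev Aq (n d : ℕ) : Type := MvPolynomial (Fin 2) Rq ⧸ qIdeal n d

/-- The candidate basis `h^0, …, h^d, l, l·h, …, l·h^d` of `Aq n d` (where `l·h^i`
corresponds to `l_{d-i}`). -/
def qBasisFam (n d : ℕ) : Fin (d + 1) ⊕ Fin (d + 1) → Aq n d := fun k =>
  match k with
  | .inl i => Ideal.Quotient.mk (qIdeal n d) (X 0 ^ (i : ℕ))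
  | .inr i => Ideal.Quotient.mk (qIdeal n d) (X 1 * X 0 ^ (i : ℕ))

open LaurentPolynomial (T)

theorem MvPolynomial.linearMap_eq_zero_of_mem_ideal_span {R σ M : Type*} [CommSemiring R]
    [AddCommMonoid M] [Module R M] (φ : MvPolynomial σ R →ₗ[R] M)
    {S : Set (MvPolynomial σ R)} (hφ : ∀ m, ∀ g ∈ S, φ (monomial m 1 * g) = 0)
    {x : MvPolynomial σ R} (hx : x ∈ Ideal.span S) : φ x = 0 := by
  suffices ∀ p, φ (p * x) = 0 by simpa using this 1
  induction hx using Submodule.span_induction with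
  | mem g hg =>
    intro p
    induction p using MvPolynomial.induction_on' with
    | monomial m c =>
      rw [show monomial m c = c • monomial m 1 by rw [smul_monomial, smul_eq_mul, mul_one],
        smul_mul_assoc, map_smul, hφ m g hg, smul_zero]
    | add p q hp hq => rw [add_mul, map_add, hp, hq, add_zero]
  | zero => simp
  | add y z _ _ hy hz => simp [mul_add, hy, hz]
  | smul r y _ hy => intro p; rw [smul_eq_mul, ← mul_assoc, hy]

theorem Ideal.Quotient.linearIndependent_mk_comp {R P M ι : Type*} [CommRing R] [CommRing P]
    [Algebra R P] [AddCommGroup M] [Module R M] {I : Ideal P} {v : ι → P} (φ : P →ₗ[R] M)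
    (hφ : ∀ x ∈ I, φ x = 0) (hv : LinearIndependent R (φ ∘ v)) :
    LinearIndependent R (Ideal.Quotient.mk I ∘ v) := by
  rw [linearIndependent_iff] at hv ⊢
  intro c hc
  apply hv c
  have hI : Finsupp.linearCombination R v c ∈ I := by
    rw [← Ideal.Quotient.eq_zero_iff_mem, ← Ideal.Quotient.mkₐ_eq_mk R,
      ← AlgHom.toLinearMap_apply, Finsupp.apply_linearCombination]
    exact hc
  rw [← Finsupp.apply_linearCombination, hφ _ hI]

section QuadricRelations

variable {A : Type*} [CommRing A] {h l v ε : A} {d k : ℕ}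

theorem quadric_l_mul_h_pow_eq_zero (hk : k ≤ 2 * d) (h₁ : h ^ (d + 1) = v * h ^ k * l)
    (h₂ : l ^ 2 = ε * l * h ^ (2 * d - k + 1)) (h₃ : h ^ (2 * d + 1) = 0) :
    l * h ^ (d + 1) = 0 := by
  calc l * h ^ (d + 1) = v * ε * l * h ^ (2 * d - k + 1 + k) := by
        rw [h₁, pow_add]; linear_combination v * h ^ k * h₂
    _ = 0 := by rw [show 2 * d - k + 1 + k = 2 * d + 1 by omega, h₃, mul_zero]

theorem quadric_l_sq_eq_zero (hk : k ≤ d) (h₂ : l ^ 2 = ε * l * h ^ (2 * d - k + 1))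
    (hlh : l * h ^ (d + 1) = 0) : l ^ 2 = 0 := by
  rw [h₂, show 2 * d - k + 1 = d + 1 + (d - k) by omega, pow_add, mul_assoc, ← mul_assoc l, hlh,
    zero_mul, mul_zero]

end QuadricRelations

section Spanning

variable {R A : Type*} [CommSemiring R] [CommSemiring A] [Algebra R A] {h l : A} {d : ℕ}

def truncatedMonomials (h l : A) (d : ℕ) : Fin (d + 1) ⊕ Fin (d + 1) → A :=
  Sum.elim (fun i => h ^ (i : ℕ)) (fun i => l * h ^ (i : ℕ))

theorem l_mul_h_pow_mem_span (hlh : l * h ^ (d + 1) = 0) (j : ℕ) :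
    l * h ^ j ∈ Submodule.span R (Set.range (truncatedMonomials h l d)) := by
  by_cases hj : j ≤ d
  · exact Submodule.subset_span ⟨.inr ⟨j, by omega⟩, rfl⟩
  · rw [show j = d + 1 + (j - (d + 1)) by omega, pow_add, ← mul_assoc, hlh, zero_mul]
    exact zero_mem _

theorem h_pow_mem_span {r : R} {k : ℕ} (h₁ : h ^ (d + 1) = algebraMap R A r * h ^ k * l)
    (hlh : l * h ^ (d + 1) = 0) (a : ℕ) :
    h ^ a ∈ Submodule.span R (Set.range (truncatedMonomials h l d)) := by
  by_cases ha : a ≤ d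
  · exact Submodule.subset_span ⟨.inl ⟨a, by omega⟩, rfl⟩
  · obtain ⟨j, rfl⟩ : ∃ j, a = d + 1 + j := ⟨a - (d + 1), by omega⟩
    rw [show h ^ (d + 1 + j) = r • (l * h ^ (k + j)) by
      rw [pow_add, h₁, Algebra.smul_def, pow_add]; ring]
    exact Submodule.smul_mem _ _ (l_mul_h_pow_mem_span hlh _)

theorem h_pow_mul_l_pow_mem_span {r : R} {k : ℕ}
    (h₁ : h ^ (d + 1) = algebraMap R A r * h ^ k * l) (hlh : l * h ^ (d + 1) = 0)
    (hl : l ^ 2 = 0) (a b : ℕ) :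
    h ^ a * l ^ b ∈ Submodule.span R (Set.range (truncatedMonomials h l d)) := by
  match b with
  | 0 => simpa using h_pow_mem_span h₁ hlh a
  | 1 => simpa [mul_comm] using l_mul_h_pow_mem_span hlh a
  | b + 2 =>
    rw [pow_add, hl, mul_zero, mul_zero]
    exact zero_mem _

end Spanning

/- `qNormalForm n d a b` is the coordinate vector of `h^a·l^b` in the basis
`h^0, …, h^d, l, …, l·h^d` of `Aq n d`, read off from `h^{d+1+j} = v·l·h^{2^n+j}`,
`l·h^{d+1} = 0` and `l² = 0`; `lCoord d a` is that of `l·h^a`. -/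
def lCoord (d a : ℕ) : Fin (d + 1) ⊕ Fin (d + 1) →₀ Rq :=
  if ha : a ≤ d then Finsupp.single (.inr ⟨a, by omega⟩) 1 else 0

def qNormalForm (n d : ℕ) : ℕ → ℕ → (Fin (d + 1) ⊕ Fin (d + 1) →₀ Rq)
  | a, 0 =>
    if ha : a ≤ d then Finsupp.single (.inl ⟨a, by omega⟩) 1
    else (T 1 : Rq) • lCoord d (a - (d + 1) + 2 ^ n)
  | a, 1 => lCoord d a
  | _, _ + 2 => 0

theorem qNormalForm_add_succ (n d a b : ℕ) :
    qNormalForm n d (a + (d + 1)) b = (T 1 : Rq) • qNormalForm n d (a + 2 ^ n) (b + 1) := by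
  match b with
  | 0 => rw [qNormalForm, dif_neg (by omega), Nat.add_sub_cancel]; rfl
  | 1 => simp [qNormalForm, lCoord]; omega
  | _ + 2 => simp [qNormalForm]

theorem qNormalForm_add_eq_zero_of_le {n d : ℕ} (hd : 2 ^ n ≤ d) (a b : ℕ) :
    qNormalForm n d (a + (2 * d - 2 ^ n + 1)) (b + 1) = 0 := by
  match b with
  | 0 => rw [qNormalForm, lCoord, dif_neg (by omega)]
  | _ + 1 => rfl

theorem qNormalForm_add_top (n d a b : ℕ) : qNormalForm n d (a + (2 * d + 1)) b = 0 := by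
  have := Nat.one_le_two_pow (n := n)
  match b with
  | 0 => rw [qNormalForm, dif_neg (by omega), lCoord, dif_neg (by omega), smul_zero]
  | 1 => rw [qNormalForm, lCoord, dif_neg (by omega)]
  | _ + 2 => rfl

theorem MvPolynomial.monomial_one_eq_X_pow_mul_X_pow {R : Type*} [CommSemiring R]
    (m : Fin 2 →₀ ℕ) : monomial m (1 : R) = X 0 ^ m 0 * X 1 ^ m 1 := by
  rw [monomial_eq, C_1, one_mul, Finsupp.prod_fintype _ _ (by simp), Fin.prod_univ_two]

def qCoord (n d : ℕ) : MvPolynomial (Fin 2) Rq →ₗ[Rq] (Fin (d + 1) ⊕ Fin (d + 1) →₀ Rq) :=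
  (basisMonomials (Fin 2) Rq).constr Rq fun m => qNormalForm n d (m 0) (m 1)

theorem qCoord_X_pow_mul_X_pow (n d a b : ℕ) :
    qCoord n d (X 0 ^ a * X 1 ^ b) = qNormalForm n d a b := by
  have hm : X 0 ^ a * X 1 ^ b =
      basisMonomials (Fin 2) Rq (Finsupp.single 0 a + Finsupp.single 1 b) := by
    simp [monomial_one_eq_X_pow_mul_X_pow]
  rw [hm, qCoord, Module.Basis.constr_basis]
  simp

theorem qCoord_eq_zero_of_mem {n d : ℕ} (hd : 2 ^ n ≤ d) {x : MvPolynomial (Fin 2) Rq}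
    (hx : x ∈ qIdeal n d) : qCoord n d x = 0 := by
  refine MvPolynomial.linearMap_eq_zero_of_mem_ideal_span _ (fun m g hg => ?_) hx
  rw [monomial_one_eq_X_pow_mul_X_pow]
  generalize m 0 = a, m 1 = b
  rcases hg with rfl | rfl | rfl
  · rw [show (X 0 ^ a * X 1 ^ b * (X 0 ^ (d + 1) - C (T 1) * X 0 ^ 2 ^ n * X 1) :
          MvPolynomial (Fin 2) Rq) =
        X 0 ^ (a + (d + 1)) * X 1 ^ b - C (T 1) * (X 0 ^ (a + 2 ^ n) * X 1 ^ (b + 1)) by ring,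
      map_sub, C_mul', map_smul, qCoord_X_pow_mul_X_pow, qCoord_X_pow_mul_X_pow,
      qNormalForm_add_succ, sub_self]
  · split_ifs
    · rw [show (X 0 ^ a * X 1 ^ b * (X 1 ^ 2 - 1 * X 1 * X 0 ^ (2 * d - 2 ^ n + 1)) :
            MvPolynomial (Fin 2) Rq) =
          X 0 ^ a * X 1 ^ (b + 2) - X 0 ^ (a + (2 * d - 2 ^ n + 1)) * X 1 ^ (b + 1) by ring,
        map_sub, qCoord_X_pow_mul_X_pow, qCoord_X_pow_mul_X_pow,
        qNormalForm_add_eq_zero_of_le hd, sub_zero]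
      rfl
    · rw [show (X 0 ^ a * X 1 ^ b * (X 1 ^ 2 - 0 * X 1 * X 0 ^ (2 * d - 2 ^ n + 1)) :
            MvPolynomial (Fin 2) Rq) = X 0 ^ a * X 1 ^ (b + 2) by ring, qCoord_X_pow_mul_X_pow]
      rfl
  · rw [show (X 0 ^ a * X 1 ^ b * X 0 ^ (2 * d + 1) : MvPolynomial (Fin 2) Rq) =
          X 0 ^ (a + (2 * d + 1)) * X 1 ^ b by ring,
      qCoord_X_pow_mul_X_pow, qNormalForm_add_top]

theorem qCoord_truncatedMonomials (n d : ℕ) :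
    qCoord n d ∘ truncatedMonomials (X 0) (X 1) d = fun k => Finsupp.single k 1 := by
  ext1 k
  rcases k with i | i
  · simpa [truncatedMonomials, qNormalForm, i.is_le] using qCoord_X_pow_mul_X_pow n d i 0
  · simpa [truncatedMonomials, qNormalForm, lCoord, i.is_le, mul_comm]
      using qCoord_X_pow_mul_X_pow n d i 1

theorem qBasisFam_eq_mk_comp (n d : ℕ) :
    qBasisFam n d = Ideal.Quotient.mk (qIdeal n d) ∘ truncatedMonomials (X 0) (X 1) d := by
  ext1 k
  rcases k with i | i <;> rfl

theorem linearIndependent_qBasisFam {n d : ℕ} (hd : 2 ^ n ≤ d) :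
    LinearIndependent Rq (qBasisFam n d) := by
  rw [qBasisFam_eq_mk_comp]
  refine Ideal.Quotient.linearIndependent_mk_comp (qCoord n d)
    (fun _ => qCoord_eq_zero_of_mem hd) ?_
  rw [qCoord_truncatedMonomials]
  exact Finsupp.linearIndependent_single_one _ _

theorem qBasisFam_eq_truncatedMonomials (n d : ℕ) :
    qBasisFam n d = truncatedMonomials (Ideal.Quotient.mk (qIdeal n d) (X 0))
      (Ideal.Quotient.mk (qIdeal n d) (X 1)) d := by
  ext1 k
  rcases k with i | i <;> simp [qBasisFam, truncatedMonomials]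

theorem span_qBasisFam_eq_top {n d : ℕ} (hd : 2 ^ n ≤ d) :
    Submodule.span Rq (Set.range (qBasisFam n d)) = ⊤ := by
  set mk := Ideal.Quotient.mk (qIdeal n d)
  have gen_eq_zero : ∀ p ∈ ({_, _, _} : Set (MvPolynomial (Fin 2) Rq)), mk p = 0 :=
    fun _ hp => Ideal.Quotient.eq_zero_iff_mem.mpr (Ideal.subset_span hp)
  have h₁ :
      mk (X 0) ^ (d + 1) = algebraMap Rq (Aq n d) (T 1) * mk (X 0) ^ 2 ^ n * mk (X 1) := by
    rw [← Ideal.Quotient.mk_algebraMap, MvPolynomial.algebraMap_eq]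
    simpa only [map_sub, map_mul, map_pow, sub_eq_zero] using gen_eq_zero _ (.inl rfl)
  have h₂ : mk (X 1) ^ 2 = mk (if 2 * d % 4 = 0 then 1 else 0) * mk (X 1) *
      mk (X 0) ^ (2 * d - 2 ^ n + 1) := by
    simpa only [map_sub, map_mul, map_pow, sub_eq_zero] using gen_eq_zero _ (.inr (.inl rfl))
  have h₃ : mk (X 0) ^ (2 * d + 1) = 0 := by
    simpa only [map_pow] using gen_eq_zero _ (.inr (.inr rfl))
  have hlh := quadric_l_mul_h_pow_eq_zero (A := Aq n d) (by omega : 2 ^ n ≤ 2 * d) h₁ h₂ h₃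
  have hl := quadric_l_sq_eq_zero hd h₂ hlh
  rw [qBasisFam_eq_truncatedMonomials, eq_top_iff]
  rintro x -
  obtain ⟨p, rfl⟩ := Ideal.Quotient.mk_surjective x
  induction p using MvPolynomial.induction_on' with
  | monomial m c =>
    rw [show monomial m c = c • monomial m 1 by rw [smul_monomial, smul_eq_mul, mul_one],
      monomial_one_eq_X_pow_mul_X_pow,
      ← Ideal.Quotient.mkₐ_eq_mk Rq, map_smul, map_mul, map_pow, map_pow]
    exact Submodule.smul_mem _ _ (h_pow_mul_l_pow_mem_span h₁ hlh hl _ _)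
  | add p q hp hq => rw [map_add]; exact add_mem hp hq

theorem qBasisFam_is_basis_general (n d : ℕ) (hD : 2 ^ (n + 1) - 1 ≤ 2 * d) :
    LinearIndependent Rq (qBasisFam n d) ∧
    Submodule.span Rq (Set.range (qBasisFam n d)) = ⊤ := by
  have hd : 2 ^ n ≤ d := by
    rw [pow_succ] at hD
    have := Nat.one_le_two_pow (n := n)
    omega
  exact ⟨linearIndependent_qBasisFam hd, span_qBasisFam_eq_top hd⟩

/-- The monomials `h^0, …, h^d, l, lh, …, lh^d` form a basis of
`A = F₂[v,v⁻¹][h,l]/(h^{d+1} − v h^{2^n} l, l² − ε·l h^{2d−2^n+1}, h^{D+1})` as a free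
`F₂[v,v⁻¹]`-module, for `n ≥ 2` and `D = 2d ≥ 2^{n+1} − 1`. -/
theorem qBasisFam_is_basis (n d : ℕ) (hn : 2 ≤ n) (hD : 2 ^ (n + 1) - 1 ≤ 2 * d) :
    LinearIndependent Rq (qBasisFam n d) ∧
    Submodule.span Rq (Set.range (qBasisFam n d)) = ⊤ :=
  qBasisFam_is_basis_general n d hD

end
end

section
/- Let D ≥ 2^n − 1 with n ≥ 2, and set D' = D − 2^n + 1. In the correspondence algebra A ⊗_R A of the split quadric (R = F_2[v,v^{-1}], with composition via the pushforward χ as above), the elements π_i = v^{-1} h^i ⊗ h^{D'−i} for 0 ≤ i ≤ D' satisfy π_i ∘ π_j = δ_{ij} π_i; i.e., they are pairwise orthogonal idempotents. -/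
/-!
Composing `v⁻¹ • (h^i ⊗ h^{D'-i})` with `v⁻¹ • (h^j ⊗ h^{D'-j})` contracts the middle factors to
`χ (h^{D'-i+j})`. The pushforward `χ` kills every power of `h` except `h^{D'}`, on which it is `v`,
so the composite vanishes unless `i = j`, and for `i = j` the factor `v` cancels one of the two `v⁻¹`.
-/

open TensorProduct

section Correspondences

variable {R A : Type*} [CommRing R] [CommRing A] [Algebra R A]

theorem comp_smul_tmul_smul_tmul (χ : A →ₗ[R] R)
    (comp : A ⊗[R] A →ₗ[R] A ⊗[R] A →ₗ[R] A ⊗[R] A)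
    (hcomp : ∀ a b c e : A, comp (a ⊗ₜ[R] b) (c ⊗ₜ[R] e) = χ (b * c) • (a ⊗ₜ[R] e))
    (r s : R) (a b c e : A) :
    comp (r • a ⊗ₜ[R] b) (s • c ⊗ₜ[R] e) = (r * s * χ (b * c)) • (a ⊗ₜ[R] e) := by
  simp only [map_smul, LinearMap.smul_apply, hcomp, smul_smul]
  congr 1
  ring

/-- `N` stands for `D' = D - 2^n + 1`. -/
def tateProjector (v : Rˣ) (h : A) (N i : ℕ) : A ⊗[R] A :=
  (↑v⁻¹ : R) • ((h ^ i) ⊗ₜ[R] (h ^ (N - i)))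

theorem comp_tateProjector (χ : A →ₗ[R] R)
    (comp : A ⊗[R] A →ₗ[R] A ⊗[R] A →ₗ[R] A ⊗[R] A)
    (hcomp : ∀ a b c e : A, comp (a ⊗ₜ[R] b) (c ⊗ₜ[R] e) = χ (b * c) • (a ⊗ₜ[R] e))
    (v : Rˣ) (h : A) {N : ℕ} (hχ : ∀ k, k ≠ N → χ (h ^ k) = 0) (hχN : χ (h ^ N) = v)
    {i : ℕ} (hi : i ≤ N) (j : ℕ) :
    comp (tateProjector v h N i) (tateProjector v h N j) =
      if i = j then tateProjector v h N i else 0 := by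
  rw [tateProjector, tateProjector, comp_smul_tmul_smul_tmul χ comp hcomp, ← pow_add]
  split_ifs with hij
  · subst hij
    rw [Nat.sub_add_cancel hi, hχN, mul_assoc, Units.inv_mul, mul_one]
  · rw [hχ _ (by omega), mul_zero, zero_smul]

end Correspondences

theorem split_quadric_tate_projectors_orthogonal_general
    (n : ℕ)
    (R : Type*) [CommRing R] (v : Rˣ)
    (A : Type*) [CommRing A] [Algebra R A]
    (h : A)
    (D : ℕ) (hDn : 2 ^ n - 1 ≤ D)
    (χ : A →ₗ[R] R)
    (hχh : ∀ k : ℕ, (k : ℤ) ≠ (D : ℤ) + 1 - 2 ^ n → χ (h ^ k) = 0)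
    (hχhD : χ (h ^ (D + 1 - 2 ^ n)) = (v : R))
    (comp : A ⊗[R] A →ₗ[R] A ⊗[R] A →ₗ[R] A ⊗[R] A)
    (hcomp : ∀ a b c e : A,
      comp (a ⊗ₜ[R] b) (c ⊗ₜ[R] e) = χ (b * c) • (a ⊗ₜ[R] e)) :
    let hp : ℤ → A := fun k => if k < 0 then 0 else h ^ k.toNat
    let D' : ℤ := (D : ℤ) - 2 ^ n + 1
    let π : ℤ → A ⊗[R] A := fun i => (↑v⁻¹ : R) • (hp i ⊗ₜ[R] hp (D' - i))
    ∀ i ∈ Finset.Icc (0 : ℤ) D', ∀ j ∈ Finset.Icc (0 : ℤ) D',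
      comp (π i) (π j) = if i = j then π i else 0 := by
  intro hp D' π i hi j hj
  set N := D + 1 - 2 ^ n
  have hN : (N : ℤ) = D' := by
    have : 1 ≤ 2 ^ n := Nat.one_le_two_pow
    simp only [N, D']
    push_cast [show 2 ^ n ≤ D + 1 by omega]
    ring
  rw [← hN, Finset.mem_Icc] at hi hj
  lift i to ℕ using hi.1
  lift j to ℕ using hj.1
  have hπ : ∀ k : ℕ, k ≤ N → π k = tateProjector v h N k := fun k hk => by
    simp only [π, hp, D', ← hN, tateProjector, ← Nat.cast_sub hk, Int.toNat_natCast]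
    rw [if_neg (by omega), if_neg (by omega)]
  have hχ : ∀ k, k ≠ N → χ (h ^ k) = 0 := fun k hk =>
    hχh k (by simp only [D'] at hN; omega)
  simp only [hπ i (by omega), hπ j (by omega), Nat.cast_inj]
  exact comp_tateProjector χ comp hcomp v h hχ hχhD (by omega : i ≤ N) j

/-- For a split quadric of dimension `D ≥ 2^n - 1` (`n ≥ 2`), the correspondences
`π_i = v⁻¹·(h^i ⊗ h^{D'-i})` for `0 ≤ i ≤ D' = D - 2^n + 1` satisfy
`π_i ∘ π_j = δ_{ij} π_i`, i.e. they are pairwise orthogonal idempotents in the correspondence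
algebra `A ⊗_R A` with composition given by the pushforward `χ`. -/
theorem split_quadric_tate_projectors_orthogonal
    (n d : ℕ) (hn : 2 ≤ n) (hd : 1 ≤ d)
    (R : Type*) [CommRing R] (h2 : (2 : R) = 0) (v : Rˣ)
    (A : Type*) [CommRing A] [Algebra R A]
    (h : A) (l : ℤ → A)
    (D : ℕ) (hD : D = 2 * d ∨ D = 2 * d + 1) (hDn : 2 ^ n - 1 ≤ D)
    (hlneg : ∀ s : ℤ, s < 0 → l s = 0)
    (hhl : ∀ i : ℤ, 0 < i → h * l i = l (i - 1))
    (hhl0 : h * l 0 = 0)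
    (hll : ∀ i j : ℤ, 0 ≤ i → i ≤ d → 0 ≤ j → j ≤ d →
      l i * l j = if i = d ∧ j = d ∧ D % 4 = 0 then l 0 else 0)
    (hpow : h ^ (d + 1) = (v : R) • l ((D : ℤ) - d - 2 ^ n))
    (χ : A →ₗ[R] R)
    (hχl0 : χ (l 0) = 1)
    (hχl : ∀ i : ℤ, 0 < i → χ (l i) = 0)
    (hχh : ∀ k : ℕ, (k : ℤ) ≠ (D : ℤ) + 1 - 2 ^ n → χ (h ^ k) = 0)
    (hχhD : χ (h ^ (D + 1 - 2 ^ n)) = (v : R))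
    (comp : A ⊗[R] A →ₗ[R] A ⊗[R] A →ₗ[R] A ⊗[R] A)
    (hcomp : ∀ a b c e : A,
      comp (a ⊗ₜ[R] b) (c ⊗ₜ[R] e) = χ (b * c) • (a ⊗ₜ[R] e)) :
    let hp : ℤ → A := fun k => if k < 0 then 0 else h ^ k.toNat
    let D' : ℤ := (D : ℤ) - 2 ^ n + 1
    let π : ℤ → A ⊗[R] A := fun i => (↑v⁻¹ : R) • (hp i ⊗ₜ[R] hp (D' - i))
    ∀ i ∈ Finset.Icc (0 : ℤ) D', ∀ j ∈ Finset.Icc (0 : ℤ) D',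
      comp (π i) (π j) = if i = j then π i else 0 :=
  split_quadric_tate_projectors_orthogonal_general n R v A h D hDn χ hχh hχhD comp hcomp
end
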